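/- Let h, q : ℝⁿ → ℝ be twice continuously differentiable with q convex and −ℓ I ⪯ ∇²h + ∇²q ⪯ ℓ I for some ℓ > 0, let P be proper closed, β ∈ (0, 1/ℓ), and let {xᵗ} satisfy xᵗ⁺¹ ∈ Argmin_x { ⟨∇h(xᵗ), x − xᵗ⟩ + (1/(2β))‖x − xᵗ‖² + P(x) } with h(x⁰) + P(x⁰) < ∞. If h + P is bounded below, then Σ_t ‖xᵗ⁺¹ − xᵗ‖² < ∞, and in particular ‖xᵗ⁺¹ − xᵗ‖ → 0. -/

import Mathlib

/-!
Along the segment from `a` to `b`, the Hessian bound `∇²h + ∇²q ⪯ ℓ I` gives the quadratic upper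
bound `(h + q)(b) ≤ (h + q)(a) + ⟪∇(h + q)(a), b - a⟫ + ℓ/2 ‖b - a‖²`; subtracting the
first-order inequality of the convex `q` leaves the same bound for `h` alone. Testing the
minimality of `xᵗ⁺¹` against `y = xᵗ` and adding this bound shows that
`Φₜ = h(xᵗ) + P(xᵗ)` decreases by at least `(1/(2β) - ℓ/2) ‖xᵗ⁺¹ - xᵗ‖²` per step, a positive
multiple since `β < 1/ℓ`. As `Φ` is bounded below, the sum telescopes to a finite bound.
-/

open scoped RealInnerProductSpace

open AffineMap

theorem ConvexOn.add_deriv_le {φ : ℝ → ℝ} {c : ℝ} (hφ : ConvexOn ℝ Set.univ φ)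
    (hc : HasDerivAt φ c 0) : φ 0 + c ≤ φ 1 := by
  have := hφ.le_slope_of_hasDerivAt (Set.mem_univ 0) (Set.mem_univ 1) zero_lt_one hc
  rw [slope_def_field, sub_zero, div_one] at this
  linarith

theorem le_add_deriv_add_half_of_deriv2_le {φ φ' φ'' : ℝ → ℝ} {M : ℝ}
    (hφ : ∀ s, HasDerivAt φ (φ' s) s) (hφ' : ∀ s, HasDerivAt φ' (φ'' s) s)
    (hM : ∀ s, φ'' s ≤ M) : φ 1 ≤ φ 0 + φ' 0 + M / 2 := by
  have hχ : ∀ s, HasDerivAt (fun s => M / 2 * s ^ 2 - φ s) (M * s - φ' s) s := fun s =>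
    (((hasDerivAt_pow 2 s).const_mul (M / 2)).sub (hφ s)).congr_deriv (by ring)
  have hχ' : ∀ s, HasDerivAt (fun s => M * s - φ' s) (M - φ'' s) s := fun s =>
    (((hasDerivAt_id s).const_mul M).sub (hφ' s)).congr_deriv (by simp)
  have hconv : ConvexOn ℝ Set.univ (fun s => M / 2 * s ^ 2 - φ s) := by
    refine convexOn_of_hasDerivWithinAt2_nonneg convex_univ
      (fun s _ => (hχ s).continuousAt.continuousWithinAt)
      (fun s _ => (hχ s).hasDerivWithinAt) (fun s _ => (hχ' s).hasDerivWithinAt)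
      (fun s _ => sub_nonneg.2 (hM s))
  have := hconv.add_deriv_le (hχ 0)
  norm_num at this
  linarith

section InnerProductSpace

variable {E : Type*} [NormedAddCommGroup E] [InnerProductSpace ℝ E]

theorem HasFDerivAt.inner_comp_lineMap {G : E → E} {G' : E →L[ℝ] E} {a b : E} {s : ℝ}
    (hG : HasFDerivAt G G' (lineMap a b s)) :
    HasDerivAt (fun s => ⟪G (lineMap a b s), b - a⟫) ⟪G' (b - a), b - a⟫ s := by
  simpa using (hG.comp_hasDerivAt s hasDerivAt_lineMap).inner ℝ (hasDerivAt_const s (b - a))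

variable [CompleteSpace E]

theorem HasGradientAt.add {f g : E → ℝ} {f' g' x : E} (hf : HasGradientAt f f' x)
    (hg : HasGradientAt g g' x) : HasGradientAt (f + g) (f' + g') x := by
  rw [hasGradientAt_iff_hasFDerivAt, map_add]
  exact hf.hasFDerivAt.add hg.hasFDerivAt

theorem HasGradientAt.comp_lineMap {f : E → ℝ} {f' a b : E} {s : ℝ}
    (hf : HasGradientAt f f' (lineMap a b s)) :
    HasDerivAt (f ∘ lineMap a b) ⟪f', b - a⟫ s := by
  simpa using hf.hasFDerivAt.comp_hasDerivAt s hasDerivAt_lineMap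

theorem ConvexOn.add_inner_gradient_le {f : E → ℝ} {f' a : E} (hf : ConvexOn ℝ Set.univ f)
    (hf' : HasGradientAt f f' a) (b : E) : f a + ⟪f', b - a⟫ ≤ f b := by
  have hline := hf.comp_affineMap (lineMap a b : ℝ →ᵃ[ℝ] E)
  have hderiv : HasDerivAt (f ∘ lineMap a b) ⟪f', b - a⟫ (0 : ℝ) :=
    HasGradientAt.comp_lineMap (by rwa [lineMap_apply_zero])
  simpa using hline.add_deriv_le hderiv

theorem le_add_inner_gradient_add_of_hessian_le {f : E → ℝ} {f' : E → E} {f'' : E → E →L[ℝ] E}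
    {ℓ : ℝ} (hf' : ∀ x, HasGradientAt f (f' x) x) (hf'' : ∀ x, HasFDerivAt f' (f'' x) x)
    (hℓ : ∀ x v, ⟪v, f'' x v⟫ ≤ ℓ * ‖v‖ ^ 2) (a b : E) :
    f b ≤ f a + ⟪f' a, b - a⟫ + ℓ / 2 * ‖b - a‖ ^ 2 := by
  have key := le_add_deriv_add_half_of_deriv2_le (φ := f ∘ lineMap a b)
    (fun s => (hf' _).comp_lineMap) (fun s => (hf'' _).inner_comp_lineMap)
    (fun s => real_inner_comm (b - a) _ ▸ hℓ (lineMap a b s) (b - a))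
  simp only [Function.comp_apply, lineMap_apply_zero, lineMap_apply_one] at key
  linarith

theorem le_add_inner_gradient_add_of_hessian_add_convex_le {h q : E → ℝ} {h' q' : E → E}
    {h'' q'' : E → E →L[ℝ] E} {ℓ : ℝ}
    (hh' : ∀ x, HasGradientAt h (h' x) x) (hq' : ∀ x, HasGradientAt q (q' x) x)
    (hh'' : ∀ x, HasFDerivAt h' (h'' x) x) (hq'' : ∀ x, HasFDerivAt q' (q'' x) x)
    (hq : ConvexOn ℝ Set.univ q) (hℓ : ∀ x v, ⟪v, h'' x v + q'' x v⟫ ≤ ℓ * ‖v‖ ^ 2) (a b : E) :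
    h b ≤ h a + ⟪h' a, b - a⟫ + ℓ / 2 * ‖b - a‖ ^ 2 := by
  have hsum := le_add_inner_gradient_add_of_hessian_le (f := h + q) (f' := h' + q')
    (fun x => (hh' x).add (hq' x)) (fun x => (hh'' x).add (hq'' x)) hℓ a b
  have hconv := hq.add_inner_gradient_le (hq' a) b
  simp only [Pi.add_apply, inner_add_left] at hsum
  linarith

end InnerProductSpace

theorem summable_of_add_mul_le {Φ a : ℕ → ℝ} {c m : ℝ} (hc : 0 < c) (ha : ∀ t, 0 ≤ a t)
    (hΦ : ∀ t, Φ (t + 1) + c * a t ≤ Φ t) (hm : ∀ t, m ≤ Φ t) : Summable a := by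
  refine summable_of_sum_range_le ha (c := (Φ 0 - m) / c) fun N => ?_
  have htele : ∑ t ∈ Finset.range N, c * a t ≤ Φ 0 - Φ N := by
    rw [← neg_sub, ← Finset.sum_range_sub, ← Finset.sum_neg_distrib]
    exact Finset.sum_le_sum fun t _ => by linarith [hΦ t]
  rw [← Finset.mul_sum] at htele
  rw [le_div_iff₀ hc]
  linarith [hm N]

theorem EReal.exists_coe_of_coe_add_le_succ {Q : ℕ → EReal} {r : ℕ → ℝ} (hQ0 : Q 0 ≠ ⊤)
    (hQ : ∀ t, Q t ≠ ⊥) (hstep : ∀ t, (r t : EReal) + Q (t + 1) ≤ Q t) :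
    ∃ p : ℕ → ℝ, (∀ t, Q t = p t) ∧ ∀ t, r t + p (t + 1) ≤ p t := by
  have hfin : ∀ t, Q t ≠ ⊤ := by
    intro t
    induction t with
    | zero => exact hQ0
    | succ t ih =>
      intro htop
      have := hstep t
      rw [htop, EReal.coe_add_top] at this
      exact ih (top_le_iff.1 this)
  have hcoe t : Q t = (Q t).toReal := (EReal.coe_toReal (hfin t) (hQ t)).symm
  refine ⟨fun t => (Q t).toReal, hcoe, fun t => ?_⟩
  have := hstep t
  rw [hcoe t, hcoe (t + 1)] at this
  exact_mod_cast this

theorem Summable.tendsto_norm_zero_of_sq {E : Type*} [SeminormedAddCommGroup E] {u : ℕ → E}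
    (hu : Summable fun t => ‖u t‖ ^ 2) : Filter.Tendsto (fun t => ‖u t‖) Filter.atTop (nhds 0) := by
  have := (Real.continuous_sqrt.tendsto 0).comp hu.tendsto_atTop_zero
  simpa [Function.comp_def, Real.sqrt_sq (norm_nonneg _)] using this

theorem prox_grad_successive_sq_summable_general {n : ℕ}
    (h q : EuclideanSpace ℝ (Fin n) → ℝ)
    (gradh gradq : EuclideanSpace ℝ (Fin n) → EuclideanSpace ℝ (Fin n))
    (Hh Hq : EuclideanSpace ℝ (Fin n) → (EuclideanSpace ℝ (Fin n) →L[ℝ] EuclideanSpace ℝ (Fin n)))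
    (P : EuclideanSpace ℝ (Fin n) → EReal)
    (ℓ β : ℝ) (hℓ : 0 < ℓ) (hβ : β ∈ Set.Ioo (0 : ℝ) (1 / ℓ))
    (hgradh : ∀ x, HasGradientAt h (gradh x) x)
    (hgradq : ∀ x, HasGradientAt q (gradq x) x)
    (hHh : ∀ x, HasFDerivAt gradh (Hh x) x)
    (hHq : ∀ x, HasFDerivAt gradq (Hq x) x)
    (hqconv : ConvexOn ℝ Set.univ q)
    (hbd : ∀ x v, -ℓ * ‖v‖ ^ 2 ≤ ⟪v, (Hh x) v + (Hq x) v⟫ ∧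
      ⟪v, (Hh x) v + (Hq x) v⟫ ≤ ℓ * ‖v‖ ^ 2)
    (hNoBot : ∀ y, P y ≠ ⊥)
    (x : ℕ → EuclideanSpace ℝ (Fin n))
    (hx0 : P (x 0) ≠ ⊤)
    (hiter : ∀ t, ∀ y,
      ((⟪gradh (x t), x (t + 1) - x t⟫ + (1 / (2 * β)) * ‖x (t + 1) - x t‖ ^ 2 : ℝ) : EReal)
          + P (x (t + 1)) ≤
        ((⟪gradh (x t), y - x t⟫ + (1 / (2 * β)) * ‖y - x t‖ ^ 2 : ℝ) : EReal) + P y)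
    (hbelow : ∃ m : ℝ, ∀ y, ((m : ℝ) : EReal) ≤ ((h y : ℝ) : EReal) + P y) :
    Summable (fun t => ‖x (t + 1) - x t‖ ^ 2) ∧
      Filter.Tendsto (fun t => ‖x (t + 1) - x t‖) Filter.atTop (nhds 0) := by
  obtain ⟨m, hm⟩ := hbelow
  have hc : 0 < 1 / (2 * β) - ℓ / 2 := by
    have hℓβ : ℓ * β < 1 := by simpa [mul_comm] using (lt_div_iff₀ hℓ).1 hβ.2
    have : ℓ / 2 < 1 / (2 * β) := by
      rw [lt_div_iff₀ (by linarith [hβ.1])]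
      linarith
    linarith
  obtain ⟨p, hp, hprox⟩ := EReal.exists_coe_of_coe_add_le_succ hx0 (fun t => hNoBot _)
    (r := fun t => ⟪gradh (x t), x (t + 1) - x t⟫ + (1 / (2 * β)) * ‖x (t + 1) - x t‖ ^ 2)
    (fun t => by simpa using hiter t (x t))
  have hdescent t := le_add_inner_gradient_add_of_hessian_add_convex_le hgradh hgradq hHh hHq
    hqconv (fun y v => (hbd y v).2) (x t) (x (t + 1))
  have hsummable : Summable fun t => ‖x (t + 1) - x t‖ ^ 2 := by
    refine summable_of_add_mul_le (Φ := fun t => h (x t) + p t) (m := m) hc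
      (fun t => by positivity) (fun t => ?_) (fun t => ?_)
    · linarith [hprox t, hdescent t]
    · exact_mod_cast hp t ▸ hm (x t)
  exact ⟨hsummable, hsummable.tendsto_norm_zero_of_sq⟩

/-- For the proximal gradient iterates under the flexible step-size rule, if `h + P`
is bounded below then the successive squared changes are summable, and in particular
`‖xᵗ⁺¹ − xᵗ‖ → 0`. -/
theorem prox_grad_successive_sq_summable {n : ℕ}
    (h q : EuclideanSpace ℝ (Fin n) → ℝ)
    (gradh gradq : EuclideanSpace ℝ (Fin n) → EuclideanSpace ℝ (Fin n))
    (Hh Hq : EuclideanSpace ℝ (Fin n) → (EuclideanSpace ℝ (Fin n) →L[ℝ] EuclideanSpace ℝ (Fin n)))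
    (P : EuclideanSpace ℝ (Fin n) → EReal)
    (ℓ β : ℝ) (hℓ : 0 < ℓ) (hβ : β ∈ Set.Ioo (0 : ℝ) (1 / ℓ))
    (hgradh : ∀ x, HasGradientAt h (gradh x) x)
    (hgradq : ∀ x, HasGradientAt q (gradq x) x)
    (hHh : ∀ x, HasFDerivAt gradh (Hh x) x) (hHhc : Continuous Hh)
    (hHq : ∀ x, HasFDerivAt gradq (Hq x) x) (hHqc : Continuous Hq)
    (hqconv : ConvexOn ℝ Set.univ q)
    (hbd : ∀ x v, -ℓ * ‖v‖ ^ 2 ≤ ⟪v, (Hh x) v + (Hq x) v⟫ ∧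
      ⟪v, (Hh x) v + (Hq x) v⟫ ≤ ℓ * ‖v‖ ^ 2)
    (hProper : ∃ y, P y ≠ ⊤) (hNoBot : ∀ y, P y ≠ ⊥) (hlsc : LowerSemicontinuous P)
    (x : ℕ → EuclideanSpace ℝ (Fin n))
    (hx0 : P (x 0) ≠ ⊤)
    (hiter : ∀ t, ∀ y,
      ((⟪gradh (x t), x (t + 1) - x t⟫ + (1 / (2 * β)) * ‖x (t + 1) - x t‖ ^ 2 : ℝ) : EReal)
          + P (x (t + 1)) ≤
        ((⟪gradh (x t), y - x t⟫ + (1 / (2 * β)) * ‖y - x t‖ ^ 2 : ℝ) : EReal) + P y)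
    (hbelow : ∃ m : ℝ, ∀ y, ((m : ℝ) : EReal) ≤ ((h y : ℝ) : EReal) + P y) :
    Summable (fun t => ‖x (t + 1) - x t‖ ^ 2) ∧
      Filter.Tendsto (fun t => ‖x (t + 1) - x t‖) Filter.atTop (nhds 0) :=
  prox_grad_successive_sq_summable_general h q gradh gradq Hh Hq P ℓ β hℓ hβ hgradh hgradq hHh hHq
    hqconv hbd hNoBot x hx0 hiter hbelow
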